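/- Let ν>0 and Σ = {(x₁,x₂) ∈ ℝ² : 0 ≤ x₁ ≤ 1, x₁^{ν+1} ≤ x₂ ≤ 1}. Then Σ has the uniform reachability property: there exists a modulus of continuity ω (a nondecreasing function ω:[0,∞)→[0,∞) with ω(r)→0 as r→0⁺) such that for all z₁,z₂ ∈ Σ there exist δ ∈ [0, ω(|z₁−z₂|)] and a pair (y,α), with α ∈ L²(0,δ), satisfying the Grushin-type dynamics on [0,δ], y(s) ∈ Σ for all s ∈ [0,δ], y(0)=z₁, y(δ)=z₂, and ‖α‖_{L²(0,δ)} ≤ ω(|z₁−z₂|). -/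

import Mathlib

/-!
Points `z₁ = (a, b)` and `z₂ = (c, d)` of `Σ` at distance `r` are joined through the column
`x₁ = P`, `P = max (max a c) ρ` with `ρ = min r 1 ^ (ν + 1)⁻¹`: move right horizontally until
meeting the curve `x₂ = x₁ ^ (ν + 1)`, follow a translate of that curve up to the column, move
vertically there with speed `P ^ ν`, and reach `z₂` by the time reversal of the analogous path
from `z₂`. Every control satisfies `|α|² ≤ 1 + (ν + 1) ^ 2`, the horizontal legs take at most
`r + ρ` each, and the vertical one at most `r / ρ ^ ν ≤ r + ρ`. So the time `δ` and
`‖α‖²_{L²} ≤ (1 + (ν + 1) ^ 2) δ` are both `O(r + ρ)`, which tends to `0` with `r`.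
-/

open MeasureTheory Set Filter Topology

noncomputable section

/-- Squared Euclidean norm on ℝ². -/
def sq2 (v : ℝ × ℝ) : ℝ := v.1 ^ 2 + v.2 ^ 2

/-- Euclidean norm on ℝ². -/
def enorm2 (v : ℝ × ℝ) : ℝ := Real.sqrt (sq2 v)

/-- `(y, α)` is an admissible trajectory for the Grushin-type dynamics on `[t,T]`,
starting from `x` and constrained to the set `S`:  `y ∈ W^{1,1}`, `α` measurable,
`y₁' = α₁`, `y₂' = |y₁|^ν α₂` a.e. (in integral form), `y(t) = x`, `y(s) ∈ S`. -/
def Admissible (ν : ℝ) (S : Set (ℝ × ℝ)) (t T : ℝ) (x : ℝ × ℝ)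
    (y α : ℝ → ℝ × ℝ) : Prop :=
  Measurable α ∧
  IntervalIntegrable (fun τ => (α τ).1) volume t T ∧
  IntervalIntegrable (fun τ => |(y τ).1| ^ ν * (α τ).2) volume t T ∧
  (∀ s ∈ Icc t T, (y s).1 = x.1 + ∫ τ in t..s, (α τ).1) ∧
  (∀ s ∈ Icc t T, (y s).2 = x.2 + ∫ τ in t..s, |(y τ).1| ^ ν * (α τ).2) ∧
  (∀ s ∈ Icc t T, y s ∈ S)

/-- `α ∈ L²(t,T)`. -/
def InL2 (α : ℝ → ℝ × ℝ) (t T : ℝ) : Prop :=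
  IntervalIntegrable (fun τ => sq2 (α τ)) volume t T

/-- The cost `J_t(x;(y,α))`. -/
def cost (l : ℝ × ℝ → ℝ → ℝ) (g : ℝ × ℝ → ℝ) (t T : ℝ) (y α : ℝ → ℝ × ℝ) : ℝ :=
  (∫ τ in t..T, (sq2 (α τ) / 2 + l (y τ) τ)) + g (y T)

/-- `Γ_t[x]`: admissible trajectories from `(x,t)` with finite cost (`α ∈ L²`). -/
def Gamma (ν : ℝ) (S : Set (ℝ × ℝ)) (t T : ℝ) (x : ℝ × ℝ) :
    Set ((ℝ → ℝ × ℝ) × (ℝ → ℝ × ℝ)) :=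
  {p | Admissible ν S t T x p.1 p.2 ∧ InL2 p.2 t T}

/-- `Γ_t^{opt}[x]`: optimal trajectories. -/
def GammaOpt (ν : ℝ) (S : Set (ℝ × ℝ)) (l : ℝ × ℝ → ℝ → ℝ) (g : ℝ × ℝ → ℝ)
    (t T : ℝ) (x : ℝ × ℝ) : Set ((ℝ → ℝ × ℝ) × (ℝ → ℝ × ℝ)) :=
  {p | p ∈ Gamma ν S t T x ∧
    ∀ q ∈ Gamma ν S t T x, cost l g t T p.1 p.2 ≤ cost l g t T q.1 q.2}

/-- The value function `u(x,t)`. -/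
def valueFun (ν : ℝ) (S : Set (ℝ × ℝ)) (l : ℝ × ℝ → ℝ → ℝ) (g : ℝ × ℝ → ℝ)
    (T : ℝ) (x : ℝ × ℝ) (t : ℝ) : ℝ :=
  sInf ((fun p => cost l g t T p.1 p.2) '' Gamma ν S t T x)

/-- Closed graph property of `Γ_t^{opt}[x]`. -/
def ClosedGraphAt (ν : ℝ) (S : Set (ℝ × ℝ)) (l : ℝ × ℝ → ℝ → ℝ) (g : ℝ × ℝ → ℝ)
    (t T : ℝ) (x : ℝ × ℝ) : Prop :=
  ∀ (xs : ℕ → ℝ × ℝ) (ys as : ℕ → ℝ → ℝ × ℝ) (y : ℝ → ℝ × ℝ),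
    (∀ n, xs n ∈ S) → Tendsto xs atTop (𝓝 x) →
    (∀ n, (ys n, as n) ∈ GammaOpt ν S l g t T (xs n)) →
    TendstoUniformlyOn ys y atTop (Icc t T) →
    ∃ α, (y, α) ∈ GammaOpt ν S l g t T x

/-- Approximation property at `x` for initial time `t`. -/
def ApproxProperty (ν : ℝ) (S : Set (ℝ × ℝ)) (l : ℝ × ℝ → ℝ → ℝ) (g : ℝ × ℝ → ℝ)
    (t T : ℝ) (x : ℝ × ℝ) : Prop :=
  ∀ y α, (y, α) ∈ Gamma ν S t T x →
    ∀ xs : ℕ → ℝ × ℝ, (∀ n, xs n ∈ S) → Tendsto xs atTop (𝓝 x) →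
      ∃ ys as : ℕ → ℝ → ℝ × ℝ,
        (∀ n, (ys n, as n) ∈ Gamma ν S t T (xs n)) ∧
        TendstoUniformlyOn ys y atTop (Icc t T) ∧
        Tendsto (fun n => (∫ τ in t..T, sq2 (as n τ)) - ∫ τ in t..T, sq2 (α τ))
          atTop (𝓝 0) ∧
        Tendsto (fun n => cost l g t T (ys n) (as n)) atTop (𝓝 (cost l g t T y α))

/-- The point `x` is unreachable: no admissible trajectory with finite cost,
starting from another point of `S`, reaches `x` at time `T`. -/
def Unreachable (ν : ℝ) (S : Set (ℝ × ℝ)) (T : ℝ) (x : ℝ × ℝ) : Prop :=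
  ∀ xb ∈ S \ {x}, ¬ ∃ p ∈ Gamma ν S 0 T xb, p.1 T = x

/-- Reachability property of the dynamics at `x`. -/
def ReachProperty (ν : ℝ) (S : Set (ℝ × ℝ)) (T : ℝ) (x : ℝ × ℝ) : Prop :=
  ∀ xs : ℕ → ℝ × ℝ, (∀ n, xs n ∈ S) → Tendsto xs atTop (𝓝 x) →
    ∃ (δ : ℕ → ℝ) (ys as : ℕ → ℝ → ℝ × ℝ),
      (∀ n, δ n ∈ Icc 0 T) ∧
      (∀ n, Admissible ν S 0 (δ n) (xs n) (ys n) (as n) ∧ InL2 (as n) 0 (δ n) ∧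
        ys n (δ n) = x) ∧
      Tendsto (fun n => ∫ τ in (0:ℝ)..(δ n), sq2 (as n τ)) atTop (𝓝 0) ∧
      Tendsto δ atTop (𝓝 0)

/-- `x₁`-convexity of a subset of the plane. -/
def X1Convex (A : Set (ℝ × ℝ)) : Prop :=
  ∀ a b h : ℝ, (a, b) ∈ A → 0 < h → (a + h, b) ∈ A →
    ∀ t ∈ Icc (0:ℝ) 1, (a + t * h, b) ∈ A

/-- Hypothesis (H1). -/
def HypH1 (S : Set (ℝ × ℝ)) : Prop :=
  ∀ x0 ∈ frontier S, x0.1 ≠ 0 →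
    ∃ R > 0, X1Convex (S ∩ Metric.ball x0 R) ∧
      ((S ∩ Metric.ball x0 R ∩ {p | x0.2 < p.2}).Nonempty →
        ∃ C > 0,
          {p : ℝ × ℝ | p.1 = x0.1 ∧ p.2 ∈ Ioc x0.2 (x0.2 + R)} ⊆ S ∨
          {p : ℝ × ℝ | p.1 ∈ Ioc x0.1 (x0.1 + R) ∧ p.2 = x0.2 + C * (p.1 - x0.1)} ⊆ S ∨
          {p : ℝ × ℝ | p.1 ∈ Ico (x0.1 - R) x0.1 ∧ p.2 = x0.2 + C * (x0.1 - p.1)} ⊆ S) ∧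
      ((S ∩ Metric.ball x0 R ∩ {p | p.2 < x0.2}).Nonempty →
        ∃ C > 0,
          {p : ℝ × ℝ | p.1 = x0.1 ∧ p.2 ∈ Ico (x0.2 - R) x0.2} ⊆ S ∨
          {p : ℝ × ℝ | p.1 ∈ Ioc x0.1 (x0.1 + R) ∧ p.2 = x0.2 - C * (p.1 - x0.1)} ⊆ S ∨
          {p : ℝ × ℝ | p.1 ∈ Ico (x0.1 - R) x0.1 ∧ p.2 = x0.2 - C * (x0.1 - p.1)} ⊆ S)

/-- Hypothesis (H2). -/
def HypH2 (ν : ℝ) (S : Set (ℝ × ℝ)) : Prop :=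
  ∀ x0 ∈ frontier S, x0.1 = 0 →
    ∃ R > 0, X1Convex (S ∩ Metric.ball x0 R) ∧
      ((S ∩ Metric.ball x0 R ∩ {p | x0.2 < p.2}).Nonempty →
        ∃ C > 0,
          {p : ℝ × ℝ | p.1 ∈ Ioc 0 R ∧ p.2 = x0.2 + C * p.1 ^ (ν + 1)} ⊆ S ∨
          {p : ℝ × ℝ | p.1 ∈ Ico (-R) 0 ∧ p.2 = x0.2 + C * (-p.1) ^ (ν + 1)} ⊆ S) ∧
      ((S ∩ Metric.ball x0 R ∩ {p | p.2 < x0.2}).Nonempty →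
        ∃ C > 0,
          {p : ℝ × ℝ | p.1 ∈ Ioc 0 R ∧ p.2 = x0.2 - C * p.1 ^ (ν + 1)} ⊆ S ∨
          {p : ℝ × ℝ | p.1 ∈ Ico (-R) 0 ∧ p.2 = x0.2 - C * (-p.1) ^ (ν + 1)} ⊆ S)

lemma Admissible.apply_left {ν : ℝ} {S : Set (ℝ × ℝ)} {t T : ℝ} {x : ℝ × ℝ} {y α : ℝ → ℝ × ℝ}
    (h : Admissible ν S t T x y α) (htT : t ≤ T) : y t = x := by
  have hs : t ∈ Icc t T := ⟨le_rfl, htT⟩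
  ext
  · simpa using h.2.2.2.1 t hs
  · simpa using h.2.2.2.2.1 t hs

section Piecewise

variable {t m T : ℝ} {f₁ f₂ : ℝ → ℝ}

lemma intervalIntegrable_piecewise (htm : t ≤ m) (hmT : m ≤ T)
    (h₁ : IntervalIntegrable f₁ volume t m) (h₂ : IntervalIntegrable f₂ volume m T) :
    IntervalIntegrable (fun τ => if τ ≤ m then f₁ τ else f₂ τ) volume t T := by
  refine IntervalIntegrable.trans (b := m) (h₁.congr fun τ hτ => ?_) (h₂.congr fun τ hτ => ?_)
  · rw [uIoc_of_le htm] at hτ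
    simp [hτ.2]
  · rw [uIoc_of_le hmT] at hτ
    simp [not_le.2 hτ.1]

lemma eq_add_integral_piecewise {u₁ u₂ : ℝ → ℝ} {x : ℝ} (htm : t ≤ m) (hmT : m ≤ T)
    (h₁ : IntervalIntegrable f₁ volume t m) (h₂ : IntervalIntegrable f₂ volume m T)
    (e₁ : ∀ s ∈ Icc t m, u₁ s = x + ∫ τ in t..s, f₁ τ)
    (e₂ : ∀ s ∈ Icc m T, u₂ s = u₁ m + ∫ τ in m..s, f₂ τ) :
    ∀ s ∈ Icc t T, (if s ≤ m then u₁ s else u₂ s) =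
      x + ∫ τ in t..s, (if τ ≤ m then f₁ τ else f₂ τ) := by
  intro s hs
  have left : ∀ s ∈ Icc t m,
      ∫ τ in t..s, (if τ ≤ m then f₁ τ else f₂ τ) = ∫ τ in t..s, f₁ τ := fun s hs =>
    intervalIntegral.integral_congr fun τ hτ => by
      rw [uIcc_of_le hs.1] at hτ
      simp [hτ.2.trans hs.2]
  split_ifs with hsm
  · rw [e₁ s ⟨hs.1, hsm⟩, left s ⟨hs.1, hsm⟩]
  · have hms : m ≤ s := le_of_not_ge hsm
    have right : ∫ τ in m..s, (if τ ≤ m then f₁ τ else f₂ τ) = ∫ τ in m..s, f₂ τ :=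
      intervalIntegral.integral_congr_ae (Eventually.of_forall fun τ hτ => by
        rw [uIoc_of_le hms] at hτ
        simp [not_le.2 hτ.1])
    rw [← intervalIntegral.integral_add_adjacent_intervals (b := m), left m ⟨htm, le_rfl⟩,
      right, e₂ s ⟨hms, hs.2⟩, e₁ m ⟨htm, le_rfl⟩, add_assoc]
    · exact intervalIntegrable_piecewise htm le_rfl h₁ (by simp)
    · exact (intervalIntegrable_piecewise (t := m) le_rfl hms (by simp)
        (h₂.mono_set (by rw [uIcc_of_le hmT, uIcc_of_le hms]; exact Icc_subset_Icc le_rfl hs.2)))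

lemma Admissible.piecewise {ν : ℝ} {S : Set (ℝ × ℝ)} {t m T : ℝ} {x : ℝ × ℝ}
    {y₁ α₁ y₂ α₂ : ℝ → ℝ × ℝ} (htm : t ≤ m) (hmT : m ≤ T)
    (h₁ : Admissible ν S t m x y₁ α₁) (h₂ : Admissible ν S m T (y₁ m) y₂ α₂) :
    Admissible ν S t T x (fun s => if s ≤ m then y₁ s else y₂ s)
      (fun s => if s ≤ m then α₁ s else α₂ s) := by
  obtain ⟨hα₁, hi₁, hj₁, he₁, hf₁, hS₁⟩ := h₁
  obtain ⟨hα₂, hi₂, hj₂, he₂, hf₂, hS₂⟩ := h₂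
  have hrate : (fun τ => |(if τ ≤ m then y₁ τ else y₂ τ).1| ^ ν *
      (if τ ≤ m then α₁ τ else α₂ τ).2) =
      fun τ => if τ ≤ m then |(y₁ τ).1| ^ ν * (α₁ τ).2 else |(y₂ τ).1| ^ ν * (α₂ τ).2 := by
    funext τ; split_ifs <;> rfl
  unfold Admissible
  rw [hrate]
  simp only [apply_ite Prod.fst, apply_ite Prod.snd]
  refine ⟨hα₁.ite measurableSet_Iic hα₂, intervalIntegrable_piecewise htm hmT hi₁ hi₂,
    intervalIntegrable_piecewise htm hmT hj₁ hj₂, eq_add_integral_piecewise htm hmT hi₁ hi₂ he₁ he₂,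
    eq_add_integral_piecewise htm hmT hj₁ hj₂ hf₁ hf₂, fun s hs => ?_⟩
  split_ifs with hsm
  · exact hS₁ s ⟨hs.1, hsm⟩
  · exact hS₂ s ⟨le_of_not_ge hsm, hs.2⟩

lemma IntervalIntegrable.comp_reflect {f : ℝ → ℝ} {t T : ℝ}
    (hf : IntervalIntegrable f volume t T) :
    IntervalIntegrable (fun τ => f (t + T - τ)) volume t T := by
  simpa using (hf.comp_sub_left (t + T)).symm

lemma eq_add_integral_reflect {f u : ℝ → ℝ} {x t T : ℝ} (htT : t ≤ T)
    (hf : IntervalIntegrable f volume t T) (hu : ∀ s ∈ Icc t T, u s = x + ∫ τ in t..s, f τ) :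
    ∀ s ∈ Icc t T, u (t + T - s) = u T + ∫ τ in t..s, -f (t + T - τ) := by
  intro s hs
  have hs' : t + T - s ∈ Icc t T := ⟨by linarith [hs.2], by linarith [hs.1]⟩
  have hf' : IntervalIntegrable f volume t (t + T - s) :=
    hf.mono_set (by rw [uIcc_of_le htT, uIcc_of_le hs'.1]; exact Icc_subset_Icc le_rfl hs'.2)
  rw [intervalIntegral.integral_neg, intervalIntegral.integral_comp_sub_left,
    show t + T - t = T by ring, ← intervalIntegral.integral_interval_sub_left hf hf',
    hu _ hs', hu T ⟨htT, le_rfl⟩]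
  ring

lemma Admissible.reflect {ν : ℝ} {S : Set (ℝ × ℝ)} {t T : ℝ} {x : ℝ × ℝ} {y α : ℝ → ℝ × ℝ}
    (htT : t ≤ T) (h : Admissible ν S t T x y α) :
    Admissible ν S t T (y T) (fun s => y (t + T - s)) (fun s => -α (t + T - s)) := by
  obtain ⟨hα, hi, hj, he, hf, hS⟩ := h
  simp only [Admissible, Prod.fst_neg, Prod.snd_neg, mul_neg]
  refine ⟨(hα.comp (measurable_const.sub measurable_id)).neg, hi.comp_reflect.neg,
    hj.comp_reflect.neg, eq_add_integral_reflect htT hi he, eq_add_integral_reflect htT hj hf,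
    fun s hs => hS _ ⟨by linarith [hs.2], by linarith [hs.1]⟩⟩

lemma sq2_neg (v : ℝ × ℝ) : sq2 (-v) = sq2 v := by
  simp [sq2]

lemma InL2.of_sq2_le {α : ℝ → ℝ × ℝ} {C t T : ℝ} (hα : Measurable α)
    (hC : ∀ τ, sq2 (α τ) ≤ C) : InL2 α t T := by
  refine (intervalIntegrable_const (c := C)).mono_fun' ?_ (Eventually.of_forall fun τ => ?_)
  · exact ((hα.fst.pow_const 2).add (hα.snd.pow_const 2)).aestronglyMeasurable
  · have : 0 ≤ sq2 (α τ) := by unfold sq2; positivity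
    simpa [abs_of_nonneg this] using hC τ

lemma integral_sq2_le {α : ℝ → ℝ × ℝ} {C t T : ℝ} (htT : t ≤ T) (hα : Measurable α)
    (hC : ∀ τ, sq2 (α τ) ≤ C) : ∫ τ in t..T, sq2 (α τ) ≤ C * (T - t) := by
  simpa [mul_comm] using intervalIntegral.integral_mono_on htT (InL2.of_sq2_le hα hC)
    intervalIntegrable_const fun τ _ => hC τ

def Steers (ν : ℝ) (S : Set (ℝ × ℝ)) (C t T : ℝ) (z₁ z₂ : ℝ × ℝ) : Prop :=
  ∃ y α : ℝ → ℝ × ℝ, Admissible ν S t T z₁ y α ∧ y T = z₂ ∧ ∀ τ, sq2 (α τ) ≤ C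

namespace Steers

variable {ν C t m T : ℝ} {S : Set (ℝ × ℝ)} {z₁ z₂ z₃ : ℝ × ℝ}

lemma refl (hC : 0 ≤ C) (hz : z₁ ∈ S) : Steers ν S C t t z₁ z₁ := by
  refine ⟨fun _ => z₁, fun _ => 0, ⟨measurable_const, by simp, by simp, ?_, ?_, ?_⟩, rfl, ?_⟩
  · intro s hs
    simp [le_antisymm hs.2 hs.1]
  · intro s hs
    simp [le_antisymm hs.2 hs.1]
  · exact fun _ _ => hz
  · simpa [sq2] using hC

lemma trans (htm : t ≤ m) (hmT : m ≤ T) (h₁ : Steers ν S C t m z₁ z₂)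
    (h₂ : Steers ν S C m T z₂ z₃) : Steers ν S C t T z₁ z₃ := by
  obtain ⟨y₁, α₁, hadm₁, rfl, hC₁⟩ := h₁
  obtain ⟨y₂, α₂, hadm₂, rfl, hC₂⟩ := h₂
  refine ⟨_, _, hadm₁.piecewise htm hmT hadm₂, ?_, fun τ => ?_⟩
  · split_ifs with hTm
    · obtain rfl : T = m := le_antisymm hTm hmT
      exact (hadm₂.apply_left le_rfl).symm
    · rfl
  · split_ifs
    exacts [hC₁ τ, hC₂ τ]

/-- Run the trajectory backwards with the opposite control. -/
lemma symm (htT : t ≤ T) (h : Steers ν S C t T z₁ z₂) : Steers ν S C t T z₂ z₁ := by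
  obtain ⟨y, α, hadm, rfl, hC⟩ := h
  refine ⟨_, _, hadm.reflect htT, ?_, fun τ => ?_⟩
  · simpa using hadm.apply_left htT
  · simpa [sq2_neg] using hC (t + T - τ)

end Steers

section Legs

variable {ν C t T p q : ℝ} {S : Set (ℝ × ℝ)}

lemma steers_horizontal (hC : 1 ≤ C) (hS : ∀ s ∈ Icc t T, (p + (s - t), q) ∈ S) :
    Steers ν S C t T (p, q) (p + (T - t), q) := by
  refine ⟨fun s => (p + (s - t), q), fun _ => (1, 0),
    ⟨measurable_const, by simp, by simp, fun s _ => ?_, fun s _ => by simp, hS⟩, rfl,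
    fun _ => by simpa [sq2] using hC⟩
  simp

lemma steers_vertical (hC : 1 ≤ C) (hS : ∀ s ∈ Icc t T, (p, q + |p| ^ ν * (s - t)) ∈ S) :
    Steers ν S C t T (p, q) (p, q + |p| ^ ν * (T - t)) := by
  refine ⟨fun s => (p, q + |p| ^ ν * (s - t)), fun _ => (0, 1),
    ⟨measurable_const, by simp, by simp, fun s _ => by simp, fun s _ => ?_, hS⟩, rfl,
    fun _ => by simpa [sq2] using hC⟩
  simp [mul_comm]

lemma integral_abs_add_sub_rpow (hν : 0 ≤ ν) (hp : 0 ≤ p) {s : ℝ} (hts : t ≤ s) :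
    ∫ τ in t..s, |p + (τ - t)| ^ ν * (ν + 1) = (p + (s - t)) ^ (ν + 1) - p ^ (ν + 1) := by
  have hbase : ∀ τ ∈ uIcc t s, |p + (τ - t)| ^ ν * (ν + 1) = (ν + 1) * (τ + (p - t)) ^ ν := by
    intro τ hτ
    rw [uIcc_of_le hts] at hτ
    rw [abs_of_nonneg (by linarith [hτ.1]), mul_comm]
    ring_nf
  rw [intervalIntegral.integral_congr hbase, intervalIntegral.integral_const_mul,
    intervalIntegral.integral_comp_add_right (fun x => x ^ ν),
    integral_rpow (Or.inl (by linarith))]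
  field_simp
  ring_nf

lemma steers_along_curve (hν : 0 ≤ ν) (hC : 1 + (ν + 1) ^ 2 ≤ C) (hp : 0 ≤ p)
    (hS : ∀ s ∈ Icc t T, (p + (s - t), q + (p + (s - t)) ^ (ν + 1) - p ^ (ν + 1)) ∈ S) :
    Steers ν S C t T (p, q) (p + (T - t), q + (p + (T - t)) ^ (ν + 1) - p ^ (ν + 1)) := by
  have hcont : Continuous fun τ => |p + (τ - t)| ^ ν * (ν + 1) := by
    fun_prop (disch := assumption)
  refine ⟨fun s => (p + (s - t), q + (p + (s - t)) ^ (ν + 1) - p ^ (ν + 1)), fun _ => (1, ν + 1),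
    ⟨measurable_const, by simp, hcont.intervalIntegrable t T, fun s _ => by simp,
      fun s hs => ?_, hS⟩, rfl, fun _ => by simpa [sq2] using hC⟩
  simp only
  rw [integral_abs_add_sub_rpow hν hp hs.1]
  ring

end Legs

def regionAboveRpow (ν : ℝ) : Set (ℝ × ℝ) :=
  {p | 0 ≤ p.1 ∧ p.1 ≤ 1 ∧ p.1 ^ (ν + 1) ≤ p.2 ∧ p.2 ≤ 1}

section Region

variable {ν C t a b P : ℝ}

lemma mk_mem_regionAboveRpow {x h : ℝ} :
    (x, h) ∈ regionAboveRpow ν ↔ 0 ≤ x ∧ x ≤ 1 ∧ x ^ (ν + 1) ≤ h ∧ h ≤ 1 :=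
  Iff.rfl

/-- Go right horizontally until hitting the curve `x₂ = x₁ ^ (ν + 1)` (or the column `x₁ = P`),
then follow the curve up to the column. -/
lemma steers_to_column (hν : 0 ≤ ν) (hC : 1 + (ν + 1) ^ 2 ≤ C)
    (hz : (a, b) ∈ regionAboveRpow ν) (haP : a ≤ P) (hP : P ≤ 1) :
    Steers ν (regionAboveRpow ν) C t (t + (P - a)) (a, b) (P, max b (P ^ (ν + 1))) := by
  obtain ⟨ha, -, hab, hb⟩ := mk_mem_regionAboveRpow.1 hz
  have hk : 0 < ν + 1 := by linarith
  have hb0 : 0 ≤ b := (Real.rpow_nonneg ha _).trans hab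
  set q := min P (b ^ (ν + 1)⁻¹)
  have hmono := Real.monotoneOn_rpow_Ici_of_exponent_nonneg hk.le
  have haq : a ≤ q := le_min haP <| by
    simpa [Real.rpow_rpow_inv ha hk.ne'] using
      Real.rpow_le_rpow (Real.rpow_nonneg ha _) hab (inv_nonneg.2 hk.le)
  have hqk : q ^ (ν + 1) = min (P ^ (ν + 1)) b := by
    rw [hmono.map_min (mem_Ici.2 (ha.trans haP)) (mem_Ici.2 (Real.rpow_nonneg hb0 _)),
      Real.rpow_inv_rpow hb0 hk.ne']
  have hqP : q ≤ P := min_le_left _ _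
  have hmax : b + P ^ (ν + 1) - q ^ (ν + 1) = max b (P ^ (ν + 1)) := by
    linarith [hqk ▸ min_add_max (P ^ (ν + 1)) b, max_comm b (P ^ (ν + 1))]
  have hq : 0 ≤ q := ha.trans haq
  have hhor : Steers ν (regionAboveRpow ν) C t (t + (q - a)) (a, b) (q, b) := by
    have h := steers_horizontal (ν := ν) (C := C) (t := t) (T := t + (q - a)) (p := a) (q := b)
      (S := regionAboveRpow ν) (by nlinarith) fun s hs => ?_
    · rwa [show a + (t + (q - a) - t) = q by ring] at h
    have hx : a + (s - t) ≤ q := by linarith [hs.2]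
    refine mk_mem_regionAboveRpow.2 ⟨by linarith [hs.1], by linarith, ?_, hb⟩
    calc (a + (s - t)) ^ (ν + 1) ≤ q ^ (ν + 1) := Real.rpow_le_rpow (by linarith [hs.1]) hx hk.le
      _ ≤ b := hqk ▸ min_le_right _ _
  have hcurve : Steers ν (regionAboveRpow ν) C (t + (q - a)) (t + (P - a)) (q, b)
      (P, max b (P ^ (ν + 1))) := by
    have h := steers_along_curve (t := t + (q - a)) (T := t + (P - a)) (q := b)
      (S := regionAboveRpow ν) hν hC hq fun s hs => ?_
    · rwa [show q + (t + (P - a) - (t + (q - a))) = P by ring, hmax] at h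
    have hx : q + (s - (t + (q - a))) ≤ P := by linarith [hs.2]
    have hx0 : 0 ≤ q + (s - (t + (q - a))) := by linarith [hs.1]
    refine mk_mem_regionAboveRpow.2 ⟨hx0, hx.trans hP, ?_, ?_⟩
    · linarith [hqk ▸ min_le_right (P ^ (ν + 1)) b]
    · linarith [Real.rpow_le_rpow hx0 hx hk.le,
        max_le hb (Real.rpow_le_one (hq.trans hqP) hP hk.le)]
  exact hhor.trans (by linarith) (by linarith) hcurve

lemma steers_in_column (hC : 1 ≤ C) (hP : 0 < P) (hP1 : P ≤ 1) {h₁ h₂ : ℝ}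
    (hh₁ : P ^ (ν + 1) ≤ h₁) (hh₁' : h₁ ≤ 1) (hh₂ : P ^ (ν + 1) ≤ h₂) (hh₂' : h₂ ≤ 1) :
    Steers ν (regionAboveRpow ν) C t (t + |h₂ - h₁| / P ^ ν) (P, h₁) (P, h₂) := by
  have hPν : 0 < P ^ ν := Real.rpow_pos_of_pos hP ν
  wlog h : h₁ ≤ h₂ generalizing h₁ h₂
  · rw [abs_sub_comm]
    exact (this hh₂ hh₂' hh₁ hh₁' (le_of_not_ge h)).symm (by simp; positivity)
  rw [abs_of_nonneg (sub_nonneg.2 h)]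
  have hv := steers_vertical (ν := ν) (t := t) (T := t + (h₂ - h₁) / P ^ ν) (p := P) (q := h₁)
    (S := regionAboveRpow ν) hC fun s hs => ?_
  · rwa [abs_of_pos hP, show h₁ + P ^ ν * (t + (h₂ - h₁) / P ^ ν - t) = h₂ by
      field_simp; ring] at hv
  have hrise : P ^ ν * (s - t) ≤ h₂ - h₁ := by
    rw [← le_div_iff₀' hPν]; linarith [hs.2]
  rw [abs_of_pos hP]
  exact mk_mem_regionAboveRpow.2 ⟨hP.le, hP1, by nlinarith [hs.1], by linarith⟩

lemma steers_through_column (hν : 0 ≤ ν) (hC : 1 + (ν + 1) ^ 2 ≤ C) {c d : ℝ}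
    (hz₁ : (a, b) ∈ regionAboveRpow ν) (hz₂ : (c, d) ∈ regionAboveRpow ν)
    (haP : a ≤ P) (hcP : c ≤ P) (hP : 0 < P) (hP1 : P ≤ 1) :
    Steers ν (regionAboveRpow ν) C 0
      ((P - a) + |max d (P ^ (ν + 1)) - max b (P ^ (ν + 1))| / P ^ ν + (P - c)) (a, b) (c, d) := by
  have hk : 0 ≤ ν + 1 := by linarith
  have hPk : P ^ (ν + 1) ≤ 1 := Real.rpow_le_one hP.le hP1 hk
  have hvert : 0 ≤ |max d (P ^ (ν + 1)) - max b (P ^ (ν + 1))| / P ^ ν := by positivity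
  have up := steers_to_column (t := 0) hν hC hz₁ haP hP1
  rw [zero_add] at up
  have across := steers_in_column (ν := ν) (C := C) (t := P - a) (by nlinarith) hP hP1
    (le_max_right b _) (max_le hz₁.2.2.2 hPk) (le_max_right d _) (max_le hz₂.2.2.2 hPk)
  have down := (steers_to_column (t := P - a + |max d (P ^ (ν + 1)) - max b (P ^ (ν + 1))| /
    P ^ ν) hν hC hz₂ hcP hP1).symm (by linarith)
  exact (up.trans (by linarith) (by linarith) across).trans (by linarith) (by linarith) down

end Region

lemma abs_fst_sub_le_enorm2 (z₁ z₂ : ℝ × ℝ) : |z₁.1 - z₂.1| ≤ enorm2 (z₁ - z₂) :=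
  Real.abs_le_sqrt (by simp [sq2]; positivity)

lemma abs_snd_sub_le_enorm2 (z₁ z₂ : ℝ × ℝ) : |z₁.2 - z₂.2| ≤ enorm2 (z₁ - z₂) :=
  Real.abs_le_sqrt (by simp [sq2]; positivity)

lemma div_rpow_min_one_le {ν r : ℝ} (hν : 0 ≤ ν) (hr : 0 < r) :
    r / (min r 1 ^ (ν + 1)⁻¹) ^ ν ≤ r + min r 1 ^ (ν + 1)⁻¹ := by
  rcases le_total r 1 with hr1 | hr1
  · have hexp : r / r ^ ((ν + 1)⁻¹ * ν) = r ^ (ν + 1)⁻¹ := by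
      rw [div_eq_iff (by positivity), ← Real.rpow_add hr]
      nth_rw 1 [← Real.rpow_one r]
      congr 1
      field_simp
      ring
    rw [min_eq_left hr1, ← Real.rpow_mul hr.le, hexp]
    linarith
  · simp [min_eq_right hr1]

/-- Points at distance `r` are joined through a column `x₁ = P` with `P ≥ min r 1 ^ (ν + 1)⁻¹`:
this balances the horizontal legs against the vertical speed `P ^ ν`. -/
def reachTime (ν r : ℝ) : ℝ := 3 * (r + min r 1 ^ (ν + 1)⁻¹)

section ReachTime

variable {ν : ℝ}

lemma reachTime_nonneg {r : ℝ} (hr : 0 ≤ r) : 0 ≤ reachTime ν r := by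
  unfold reachTime
  have := Real.rpow_nonneg (le_min hr zero_le_one) (ν + 1)⁻¹
  positivity

lemma monotoneOn_reachTime (hk : 0 < ν + 1) : MonotoneOn (reachTime ν) (Ici 0) :=
  fun r hr s _ hrs => by
    unfold reachTime
    gcongr
    exact le_min hr zero_le_one

lemma tendsto_reachTime_zero (hk : 0 < ν + 1) : Tendsto (reachTime ν) (𝓝 0) (𝓝 0) := by
  have hcont : Continuous (reachTime ν) := by
    unfold reachTime
    have := Real.continuous_rpow_const (inv_nonneg.2 hk.le)
    fun_prop
  simpa [reachTime, Real.zero_rpow (inv_ne_zero hk.ne')] using hcont.tendsto 0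

end ReachTime

lemma exists_steers_regionAboveRpow {ν : ℝ} (hν : 0 ≤ ν) {z₁ z₂ : ℝ × ℝ}
    (hz₁ : z₁ ∈ regionAboveRpow ν) (hz₂ : z₂ ∈ regionAboveRpow ν) :
    ∃ δ, 0 ≤ δ ∧ δ ≤ reachTime ν (enorm2 (z₁ - z₂)) ∧
      Steers ν (regionAboveRpow ν) (1 + (ν + 1) ^ 2) 0 δ z₁ z₂ := by
  have hac := abs_fst_sub_le_enorm2 z₁ z₂
  have hbd := abs_snd_sub_le_enorm2 z₁ z₂
  obtain ⟨a, b⟩ := z₁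
  obtain ⟨c, d⟩ := z₂
  set r := enorm2 ((a, b) - (c, d))
  have hr0 : 0 ≤ r := Real.sqrt_nonneg _
  rcases hr0.eq_or_lt with hr | hr
  · obtain rfl : a = c := by rw [← hr] at hac; simpa [sub_eq_zero] using hac
    obtain rfl : b = d := by rw [← hr] at hbd; simpa [sub_eq_zero] using hbd
    exact ⟨0, le_rfl, reachTime_nonneg hr.le, Steers.refl (by positivity) hz₁⟩
  set ρ := min r 1 ^ (ν + 1)⁻¹
  have hρ : 0 < ρ := Real.rpow_pos_of_pos (lt_min hr one_pos) _
  set P := max (max a c) ρ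
  have hρP : ρ ≤ P := le_max_right _ _
  have hP : 0 < P := hρ.trans_le hρP
  have hP1 : P ≤ 1 := max_le (max_le hz₁.2.1 hz₂.2.1)
    (Real.rpow_le_one (le_min hr.le zero_le_one) (min_le_right _ _) (by positivity))
  have haP : a ≤ P := (le_max_left a c).trans (le_max_left _ _)
  have hcP : c ≤ P := (le_max_right a c).trans (le_max_left _ _)
  have hPac : P ≤ max a c + ρ :=
    max_le (le_add_of_nonneg_right hρ.le) (le_add_of_nonneg_left (hz₁.1.trans (le_max_left a c)))
  have hac' := abs_le.1 hac
  have hmax : max a c ≤ min a c + r := by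
    rcases le_total a c with h | h <;> simp [h] <;> linarith
  have hvert : |max d (P ^ (ν + 1)) - max b (P ^ (ν + 1))| / P ^ ν ≤ r + ρ :=
    calc _ ≤ r / ρ ^ ν := div_le_div₀ hr.le
          ((abs_max_sub_max_le_abs d b _).trans (by rwa [abs_sub_comm]))
          (Real.rpow_pos_of_pos hρ ν) (Real.rpow_le_rpow hρ.le hρP hν)
      _ ≤ r + ρ := div_rpow_min_one_le hν hr
  refine ⟨_, ?_, ?_, steers_through_column hν le_rfl hz₁ hz₂ haP hcP hP hP1⟩
  · have : 0 ≤ |max d (P ^ (ν + 1)) - max b (P ^ (ν + 1))| / P ^ ν := by positivity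
    linarith
  · unfold reachTime
    linarith [min_le_left a c, min_le_right a c]

/-- the set `Σ = {0 ≤ x₁ ≤ 1, x₁^{ν+1} ≤ x₂ ≤ 1}` has the uniform
reachability property with a modulus of continuity. -/
theorem uniform_reachability_example
    (ν : ℝ) (hν : 0 < ν) :
    ∃ ω : ℝ → ℝ, MonotoneOn ω (Ici 0) ∧ (∀ r ∈ Ici (0 : ℝ), 0 ≤ ω r) ∧
      Tendsto ω (𝓝[>] 0) (𝓝 0) ∧
      ∀ z₁ ∈ {p : ℝ × ℝ | 0 ≤ p.1 ∧ p.1 ≤ 1 ∧ p.1 ^ (ν + 1) ≤ p.2 ∧ p.2 ≤ 1},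
        ∀ z₂ ∈ {p : ℝ × ℝ | 0 ≤ p.1 ∧ p.1 ≤ 1 ∧ p.1 ^ (ν + 1) ≤ p.2 ∧ p.2 ≤ 1},
          ∃ δ : ℝ, 0 ≤ δ ∧ δ ≤ ω (enorm2 (z₁ - z₂)) ∧
            ∃ y α : ℝ → ℝ × ℝ,
              Admissible ν {p : ℝ × ℝ | 0 ≤ p.1 ∧ p.1 ≤ 1 ∧ p.1 ^ (ν + 1) ≤ p.2 ∧ p.2 ≤ 1}
                0 δ z₁ y α ∧
              InL2 α 0 δ ∧ y δ = z₂ ∧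
              Real.sqrt (∫ τ in (0 : ℝ)..δ, sq2 (α τ)) ≤ ω (enorm2 (z₁ - z₂)) := by
  set L := 1 + (ν + 1) ^ 2
  have hk : 0 < ν + 1 := by linarith
  have hT := tendsto_reachTime_zero hk
  refine ⟨fun r => reachTime ν r + √(L * reachTime ν r), ?_, fun r hr => ?_, ?_, ?_⟩
  · exact fun r hr s hs hrs => add_le_add (monotoneOn_reachTime hk hr hs hrs)
      (Real.sqrt_le_sqrt (by gcongr; exact monotoneOn_reachTime hk hr hs hrs))
  · exact add_nonneg (reachTime_nonneg hr) (Real.sqrt_nonneg _)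
  · simpa using tendsto_nhdsWithin_of_tendsto_nhds (hT.add (hT.const_mul L).sqrt)
  intro z₁ hz₁ z₂ hz₂
  obtain ⟨δ, hδ, hδr, y, α, hadm, hend, hC⟩ := exists_steers_regionAboveRpow hν.le hz₁ hz₂
  refine ⟨δ, hδ, le_add_of_le_of_nonneg hδr (Real.sqrt_nonneg _), y, α, hadm,
    InL2.of_sq2_le hadm.1 hC, hend, ?_⟩
  calc √(∫ τ in (0 : ℝ)..δ, sq2 (α τ)) ≤ √(L * δ) := by
        simpa using Real.sqrt_le_sqrt (integral_sq2_le hδ hadm.1 hC)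
    _ ≤ √(L * reachTime ν (enorm2 (z₁ - z₂))) := by gcongr
    _ ≤ _ := le_add_of_nonneg_left (reachTime_nonneg (Real.sqrt_nonneg _))
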